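/- arXiv:1901.02516 — 6 statements merged into one kernel-verified Lean document; each statement's English description precedes it below -/
import Mathlib

section
/- Let M be a unital C*-algebra with a faithful tracial state τ, let D be a C*-subalgebra of M containing the unit, let A be a unital subalgebra of M containing D, and let Φ : A → D be a unital algebra homomorphism with Φ(d) = d for all d ∈ D and τ(Φ(a)) = τ(a) for all a ∈ A. Then D = A ∩ A*, where A* = {a* : a ∈ A}. Moreover Φ is unique: if Φ' : A → D is another unital algebra homomorphism with Φ'(d) = d for all d ∈ D and τ(Φ'(a)) = τ(a) for all a ∈ A, then Φ' = Φ. -/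
open scoped ComplexOrder

/-!
A `τ`-preserving homomorphism `Ψ : A → D` fixing `D` satisfies `τ (d * Ψ a) = τ (d * a)` for
`d ∈ D`, so it behaves like a trace-preserving conditional expectation, and faithfulness of `τ`
turns this into equalities. For two such maps and `b = Ψ' a - Ψ a ∈ D` it gives
`τ (star b * b) = τ (star b * Ψ' a) - τ (star b * Ψ a) = 0`. For `x ∈ A ∩ A*`, multiplicativity of
`Ψ` on `star x * x` and the trace property give `τ (star (x - Ψ x) * (x - Ψ x)) = 0`, so
`x = Ψ x ∈ D`.
-/

theorem eq_of_trace_star_sub_mul_eq {R M : Type*} [CommRing R] [Ring M] [Star M] [Algebra R M]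
    (τ : M →ₗ[R] R) (hτ : ∀ a : M, τ (star a * a) = 0 → a = 0) {x y : M}
    (h : τ (star (x - y) * x) = τ (star (x - y) * y)) : x = y :=
  sub_eq_zero.mp <| hτ _ <| by rw [mul_sub, map_sub, h, sub_self]

namespace Subalgebra

variable {R M : Type*} [CommRing R] [Ring M] [Algebra R M]
  (τ : M →ₗ[R] R) {D A : Subalgebra R M} (hDA : D ≤ A)

structure IsTraceExpectation (Ψ : A →ₐ[R] M) : Prop where
  map_mem : ∀ a : A, Ψ a ∈ D
  map_of_mem : ∀ d : M, ∀ hd : d ∈ D, Ψ ⟨d, hDA hd⟩ = d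
  trace_map : ∀ a : A, τ (Ψ a) = τ (a : M)

namespace IsTraceExpectation

variable {τ hDA} {Ψ : A →ₐ[R] M} (hΨ : IsTraceExpectation τ hDA Ψ)
include hΨ

theorem trace_mul_map {d : M} (hd : d ∈ D) (a : A) : τ (d * Ψ a) = τ (d * a) := by
  simpa only [map_mul, hΨ.map_of_mem d hd, MulMemClass.coe_mul] using
    hΨ.trace_map (⟨d, hDA hd⟩ * a)

variable [StarRing M]

theorem trace_star_mul_map (hτtr : ∀ a b : M, τ (a * b) = τ (b * a)) {x : M} (hx : x ∈ A)
    (hsx : star x ∈ A) : τ (star x * Ψ ⟨x, hx⟩) = τ (star x * x) := by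
  calc τ (star x * Ψ ⟨x, hx⟩) = τ (Ψ ⟨x, hx⟩ * star x) := hτtr _ _
    _ = τ (Ψ ⟨x, hx⟩ * Ψ ⟨star x, hsx⟩) := (hΨ.trace_mul_map (hΨ.map_mem _) ⟨star x, hsx⟩).symm
    _ = τ (Ψ ⟨star x, hsx⟩ * Ψ ⟨x, hx⟩) := hτtr _ _
    _ = τ (star x * x) := by
      simpa only [map_mul, MulMemClass.coe_mul] using hΨ.trace_map (⟨star x, hsx⟩ * ⟨x, hx⟩)

theorem map_eq_self_of_star_mem (hτtr : ∀ a b : M, τ (a * b) = τ (b * a))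
    (hτ : ∀ a : M, τ (star a * a) = 0 → a = 0) (hDstar : ∀ d ∈ D, star d ∈ D) {x : M}
    (hx : x ∈ A) (hsx : star x ∈ A) : Ψ ⟨x, hx⟩ = x := by
  set p := Ψ ⟨x, hx⟩
  have hp : τ (star p * p) = τ (star p * x) := hΨ.trace_mul_map (hDstar p (hΨ.map_mem _)) _
  refine (eq_of_trace_star_sub_mul_eq τ hτ ?_).symm
  rw [star_sub, sub_mul, sub_mul, map_sub, map_sub, hΨ.trace_star_mul_map hτtr hx hsx, hp]

theorem unique (hτ : ∀ a : M, τ (star a * a) = 0 → a = 0) (hDstar : ∀ d ∈ D, star d ∈ D)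
    {Ψ' : A →ₐ[R] M} (hΨ' : IsTraceExpectation τ hDA Ψ') : Ψ' = Ψ := by
  ext a
  have hb : star (Ψ' a - Ψ a) ∈ D :=
    hDstar _ (D.sub_mem (hΨ'.map_mem a) (hΨ.map_mem a))
  exact eq_of_trace_star_sub_mul_eq τ hτ <| by
    rw [hΨ'.trace_mul_map hb, hΨ.trace_mul_map hb]

end IsTraceExpectation

end Subalgebra

theorem diagonal_eq_inter_star_and_unique_general
    {M : Type*} [CStarAlgebra M]
    (τ : M →ₗ[ℂ] ℂ)
    (hτtr : ∀ a b : M, τ (a * b) = τ (b * a))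
    (hτfaithful : ∀ a : M, τ (star a * a) = 0 → a = 0)
    (D A : Subalgebra ℂ M)
    (hDstar : ∀ d ∈ D, star d ∈ D)
    (hDA : D ≤ A)
    (Φ : ↥A →ₐ[ℂ] M)
    (hΦD : ∀ a : ↥A, Φ a ∈ D)
    (hΦid : ∀ d : M, ∀ hd : d ∈ D, Φ ⟨d, hDA hd⟩ = d)
    (hΦτ : ∀ a : ↥A, τ (Φ a) = τ (a : M)) :
    (D : Set M) = {x : M | x ∈ A ∧ star x ∈ A} ∧
      ∀ Φ' : ↥A →ₐ[ℂ] M, (∀ a : ↥A, Φ' a ∈ D) →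
        (∀ d : M, ∀ hd : d ∈ D, Φ' ⟨d, hDA hd⟩ = d) →
        (∀ a : ↥A, τ (Φ' a) = τ (a : M)) → Φ' = Φ := by
  have hΦ : Subalgebra.IsTraceExpectation τ hDA Φ := ⟨hΦD, hΦid, hΦτ⟩
  refine ⟨Set.Subset.antisymm (fun d hd ↦ ⟨hDA hd, hDA (hDstar d hd)⟩) ?_, ?_⟩
  · rintro x ⟨hx, hsx⟩
    rw [← hΦ.map_eq_self_of_star_mem hτtr hτfaithful hDstar hx hsx]
    exact hΦD _
  · exact fun Φ' hΦ'D hΦ'id hΦ'τ ↦ hΦ.unique hτfaithful hDstar ⟨hΦ'D, hΦ'id, hΦ'τ⟩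

/-- Let `M` be a unital C*-algebra with a faithful tracial state `τ`, `D` a
C*-subalgebra of `M` containing the unit, `A` a unital subalgebra of `M` containing `D`, and
`Φ : A → D` a unital algebra homomorphism restricting to the identity on `D` and preserving `τ`.
Then `D = A ∩ A*`, and `Φ` is the unique such map. -/
theorem diagonal_eq_inter_star_and_unique
    {M : Type*} [CStarAlgebra M] [PartialOrder M] [StarOrderedRing M]
    (τ : M →ₗ[ℂ] ℂ)
    (hτ1 : τ 1 = 1)
    (hτpos : ∀ a : M, 0 ≤ a → 0 ≤ τ a)
    (hτtr : ∀ a b : M, τ (a * b) = τ (b * a))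
    (hτfaithful : ∀ a : M, τ (star a * a) = 0 → a = 0)
    (D A : Subalgebra ℂ M)
    (hDstar : ∀ d ∈ D, star d ∈ D)
    (hDclosed : IsClosed (D : Set M))
    (hDA : D ≤ A)
    (Φ : ↥A →ₐ[ℂ] M)
    (hΦD : ∀ a : ↥A, Φ a ∈ D)
    (hΦid : ∀ d : M, ∀ hd : d ∈ D, Φ ⟨d, hDA hd⟩ = d)
    (hΦτ : ∀ a : ↥A, τ (Φ a) = τ (a : M)) :
    (D : Set M) = {x : M | x ∈ A ∧ star x ∈ A} ∧
      ∀ Φ' : ↥A →ₐ[ℂ] M, (∀ a : ↥A, Φ' a ∈ D) →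
        (∀ d : M, ∀ hd : d ∈ D, Φ' ⟨d, hDA hd⟩ = d) →
        (∀ a : ↥A, τ (Φ' a) = τ (a : M)) → Φ' = Φ :=
  diagonal_eq_inter_star_and_unique_general τ hτtr hτfaithful D A hDstar hDA Φ hΦD hΦid hΦτ
end

section
/- Let A and B be associative algebras over ℂ and let Φ : A → B be a Jordan homomorphism, i.e. a linear map with Φ(x²) = Φ(x)² for all x ∈ A. Then for every a ∈ A with Φ(a) = 0 and every b ∈ A, the elements Φ(ab) and Φ(ba) have square zero: Φ(ab)² = 0 and Φ(ba)² = 0. -/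
/-!
Polarizing `Φ(x²) = Φ(x)²` gives `Φ(xy + yx) = Φ(x)Φ(y) + Φ(y)Φ(x)`, and from it (dividing by `2`)
the triple identity `Φ(xyx) = Φ(x)Φ(y)Φ(x)` and its linearization
`Φ(xyz + zyx) = Φ(x)Φ(y)Φ(z) + Φ(z)Φ(y)Φ(x)`. For `Φ(a) = 0` the linearized triple identity at
`(a, b, ab)` gives `Φ((ab)²) = -Φ(a b² a) = -Φ(a)Φ(b²)Φ(a) = 0`, and the polarized identity gives
`Φ(ba) = -Φ(ab)`.
-/

section NonAssoc

variable {A B : Type*} [NonUnitalNonAssocRing A] [NonUnitalNonAssocRing B]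

theorem jordan_map_mul_add_mul_comm (Φ : A →+ B) (hΦ : ∀ x, Φ (x * x) = Φ x * Φ x) (x y : A) :
    Φ (x * y) + Φ (y * x) = Φ x * Φ y + Φ y * Φ x := by
  have h := hΦ (x + y)
  simp only [add_mul, mul_add, map_add, hΦ] at h
  linear_combination (norm := abel) h

theorem jordan_map_mul_comm_of_map_eq_zero (Φ : A →+ B) (hΦ : ∀ x, Φ (x * x) = Φ x * Φ x)
    {a : A} (ha : Φ a = 0) (b : A) : Φ (b * a) = -Φ (a * b) := by
  have h := jordan_map_mul_add_mul_comm Φ hΦ a b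
  rw [ha, zero_mul, mul_zero, add_zero] at h
  exact eq_neg_of_add_eq_zero_right h

end NonAssoc

section Assoc

variable {A B : Type*} [NonUnitalRing A] [NonUnitalRing B]

theorem jordan_map_triple [IsAddTorsionFree B] (Φ : A →+ B) (hΦ : ∀ x, Φ (x * x) = Φ x * Φ x)
    (x y : A) : Φ (x * y * x) = Φ x * Φ y * Φ x := by
  have polar := jordan_map_mul_add_mul_comm Φ hΦ
  -- `x(xy + yx) + (xy + yx)x = x²y + yx² + 2xyx`, and both sides can be polarized
  have h := polar x (x * y + y * x)
  rw [map_add, polar x y] at h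
  have hsq := polar (x * x) y
  simp only [mul_add, add_mul, mul_assoc, map_add, hΦ] at h hsq ⊢
  apply nsmul_right_injective two_ne_zero
  simp only [two_nsmul]
  linear_combination (norm := abel) h - hsq

theorem jordan_map_triple_add_triple_rev [IsAddTorsionFree B] (Φ : A →+ B)
    (hΦ : ∀ x, Φ (x * x) = Φ x * Φ x) (x y z : A) :
    Φ (x * y * z) + Φ (z * y * x) = Φ x * Φ y * Φ z + Φ z * Φ y * Φ x := by
  have h := jordan_map_triple Φ hΦ (x + z) y
  simp only [map_add, add_mul, mul_add, jordan_map_triple Φ hΦ] at h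
  linear_combination (norm := abel) h

theorem jordan_map_mul_mul_self_eq_zero_of_map_eq_zero [IsAddTorsionFree B] (Φ : A →+ B)
    (hΦ : ∀ x, Φ (x * x) = Φ x * Φ x) {a : A} (ha : Φ a = 0) (b : A) :
    Φ (a * b) * Φ (a * b) = 0 := by
  have h := jordan_map_triple_add_triple_rev Φ hΦ a b (a * b)
  have hb2 : Φ (a * b * b * a) = 0 := by
    rw [mul_assoc a b b, jordan_map_triple Φ hΦ, ha, zero_mul, mul_zero]
  rwa [hb2, ha, add_zero, zero_mul, mul_zero, zero_mul, add_zero, hΦ] at h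

end Assoc

/-- Let `Φ : A → B` be a Jordan homomorphism between associative ℂ-algebras,
i.e. a linear map with `Φ(x²) = Φ(x)²` for all `x`. Then for every `a ∈ A` with `Φ(a) = 0` and
every `b ∈ A`, the elements `Φ(ab)` and `Φ(ba)` have square zero. -/
theorem jordanHom_image_of_ker_mul_sq_zero
    {A B : Type*} [NonUnitalRing A] [Module ℂ A] [NonUnitalRing B] [Module ℂ B]
    (Φ : A →ₗ[ℂ] B)
    (hJordan : ∀ x : A, Φ (x * x) = Φ x * Φ x)
    (a : A) (ha : Φ a = 0) (b : A) :
    Φ (a * b) * Φ (a * b) = 0 ∧ Φ (b * a) * Φ (b * a) = 0 := by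
  have : IsAddTorsionFree B := .of_isTorsionFree ℂ B
  have hab : Φ (a * b) * Φ (a * b) = 0 :=
    jordan_map_mul_mul_self_eq_zero_of_map_eq_zero Φ.toAddMonoidHom hJordan ha b
  have hba : Φ (b * a) = -Φ (a * b) :=
    jordan_map_mul_comm_of_map_eq_zero Φ.toAddMonoidHom hJordan ha b
  exact ⟨hab, by rw [hba, neg_mul_neg, hab]⟩
end

section
/- Let C be a C*-algebra, let A be a norm-closed subalgebra of C, and let B be a norm-closed selfadjoint subalgebra of A (so B is a C*-subalgebra of C contained in A). Let P : A → B be a linear Jordan homomorphism (P(x²) = P(x)² for all x ∈ A) with P(b) = b for all b ∈ B and P(b₁ a b₂) = b₁ P(a) b₂ for all b₁, b₂ ∈ B and a ∈ A. If B has no nonzero square-zero elements (b ∈ B and b² = 0 imply b = 0), then P is an algebra homomorphism: P(xy) = P(x)P(y) for all x, y ∈ A. -/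
/-!
The kernel of a Jordan homomorphism `f` into a `2`-torsion-free ring whose range contains no
nonzero square-zero element is a two-sided ideal: if `f k = 0`, then `s = p k + k p` lies in the
kernel as well, and expanding `f (s * s) = 0` with the triple-product identity
`f (x y x) = f x f y f x` gives `2 f (p k)² = 0`, so `f (p k) = 0`. Hence `f (x y)` depends only
on `f x` and `f y`. Since `P` fixes `B` pointwise, `P (x y) = P (P x · P y) = P x · P y`.
-/

def IsJordanHom {R S F : Type*} [Mul R] [Mul S] [FunLike F R S] (f : F) : Prop :=
  ∀ x, f (x * x) = f x * f x

namespace IsJordanHom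

variable {R S F : Type*} [NonUnitalRing R] [NonUnitalRing S] [FunLike F R S]
  [AddMonoidHomClass F R S] {f : F}

theorem map_mul_add_mul (hf : IsJordanHom f) (x y : R) :
    f (x * y + y * x) = f x * f y + f y * f x := by
  have h : x * y + y * x = (x + y) * (x + y) - x * x - y * y := by noncomm_ring
  rw [h, map_sub, map_sub, hf, hf, hf, map_add]
  noncomm_ring

theorem map_triple_product [IsAddTorsionFree S] (hf : IsJordanHom f) (x y : R) :
    f (x * y * x) = f x * f y * f x := by
  have h : 2 • (x * y * x) =
      x * (x * y + y * x) + (x * y + y * x) * x - (x * x * y + y * (x * x)) := by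
    noncomm_ring
  apply nsmul_right_injective two_ne_zero
  change 2 • f _ = 2 • _
  rw [← map_nsmul, h, map_sub, hf.map_mul_add_mul x, hf.map_mul_add_mul (x * x),
    hf.map_mul_add_mul x, hf]
  noncomm_ring

theorem map_mul_eq_zero_of_map_eq_zero [IsAddTorsionFree S] (hf : IsJordanHom f)
    (hsq : ∀ x, f x * f x = 0 → f x = 0) {k : R} (hk : f k = 0) (p : R) :
    f (p * k) = 0 ∧ f (k * p) = 0 := by
  have hanti : f (k * p) = -f (p * k) := by
    have h := hf.map_mul_add_mul p k
    rw [hk, mul_zero, zero_mul, add_zero, map_add] at h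
    exact eq_neg_of_add_eq_zero_right h
  have hsquare : 2 • (f (p * k) * f (p * k)) = 0 := by
    have h : (p * k + k * p) * (p * k + k * p) =
        p * k * (p * k) + k * p * (k * p) + (p * (k * k) * p + k * (p * p) * k) := by
      noncomm_ring
    have hzero := hf (p * k + k * p)
    rw [hf.map_mul_add_mul, hk, h, map_add, map_add, map_add, hf, hf, hanti,
      hf.map_triple_product, hf.map_triple_product, hf, hk] at hzero
    simpa [two_nsmul] using hzero
  have hv := hsq _ (two_nsmul_eq_zero.mp hsquare)
  exact ⟨hv, by rw [hanti, hv, neg_zero]⟩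

theorem map_mul_eq_of_map_eq [IsAddTorsionFree S] (hf : IsJordanHom f)
    (hsq : ∀ x, f x * f x = 0 → f x = 0) {x y x' y' : R} (hx : f x' = f x) (hy : f y' = f y) :
    f (x * y) = f (x' * y') := by
  have hkx : f (x - x') = 0 := by rw [map_sub, hx, sub_self]
  have hky : f (y - y') = 0 := by rw [map_sub, hy, sub_self]
  have h : x * y = x' * y' + x * (y - y') + (x - x') * y' := by noncomm_ring
  rw [h, map_add, map_add, (hf.map_mul_eq_zero_of_map_eq_zero hsq hky x).1,
    (hf.map_mul_eq_zero_of_map_eq_zero hsq hkx y').2, add_zero, add_zero]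

end IsJordanHom

theorem jordan_bimodule_projection_is_hom_of_no_sq_zero_general
    {C : Type*} [NonUnitalCStarAlgebra C]
    (A B : NonUnitalSubalgebra ℂ C)
    (hBA : B ≤ A)
    (P : ↥A →ₗ[ℂ] C)
    (hPrange : ∀ x : ↥A, P x ∈ B)
    (hPJordan : ∀ x : ↥A, P (x * x) = P x * P x)
    (hPid : ∀ b : C, ∀ hb : b ∈ B, P ⟨b, hBA hb⟩ = b)
    (hB_no_sq_zero : ∀ b ∈ B, b * b = 0 → b = 0) :
    ∀ x y : ↥A, P (x * y) = P x * P y := by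
  intro x y
  have : IsAddTorsionFree C := .of_isTorsionFree ℂ C
  have hP : IsJordanHom P := hPJordan
  have hsq (z : ↥A) : P z * P z = 0 → P z = 0 := hB_no_sq_zero _ (hPrange z)
  calc P (x * y) = P (⟨P x, hBA (hPrange x)⟩ * ⟨P y, hBA (hPrange y)⟩) :=
        hP.map_mul_eq_of_map_eq hsq (hPid _ (hPrange x)) (hPid _ (hPrange y))
    _ = P x * P y := hPid _ (mul_mem (hPrange x) (hPrange y))

/-- Let `C` be a C*-algebra, `A` a norm-closed subalgebra of `C`, and `B` a
norm-closed selfadjoint subalgebra of `A`. Let `P : A → B` be a linear Jordan homomorphism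
restricting to the identity on `B` which is a `B`-bimodule map. If `B` has no nonzero
square-zero elements, then `P` is an algebra homomorphism. -/
theorem jordan_bimodule_projection_is_hom_of_no_sq_zero
    {C : Type*} [NonUnitalCStarAlgebra C] [StarModule ℂ C]
    (A B : NonUnitalSubalgebra ℂ C)
    (hAclosed : IsClosed (A : Set C))
    (hBclosed : IsClosed (B : Set C))
    (hBstar : ∀ b ∈ B, star b ∈ B)
    (hBA : B ≤ A)
    (P : ↥A →ₗ[ℂ] C)
    (hPrange : ∀ x : ↥A, P x ∈ B)
    (hPJordan : ∀ x : ↥A, P (x * x) = P x * P x)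
    (hPid : ∀ b : C, ∀ hb : b ∈ B, P ⟨b, hBA hb⟩ = b)
    (hPbimod : ∀ b₁ ∈ B, ∀ b₂ ∈ B, ∀ a : ↥A, ∀ h : b₁ * (a : C) * b₂ ∈ A,
      P ⟨b₁ * (a : C) * b₂, h⟩ = b₁ * P a * b₂)
    (hB_no_sq_zero : ∀ b ∈ B, b * b = 0 → b = 0) :
    ∀ x y : ↥A, P (x * y) = P x * P y :=
  jordan_bimodule_projection_is_hom_of_no_sq_zero_general A B hBA P hPrange hPJordan hPid
    hB_no_sq_zero
end

section
/- Let C be a C*-algebra, let A be a norm-closed subalgebra of C, and let B be a norm-closed selfadjoint subalgebra of A (so B is a C*-subalgebra of C contained in A). Let P : A → B be a linear Jordan homomorphism (P(x²) = P(x)² for all x ∈ A) with P(b) = b for all b ∈ B and P(b₁ a b₂) = b₁ P(a) b₂ for all b₁, b₂ ∈ B and a ∈ A. Then P is an algebra homomorphism: P(xy) = P(x)P(y) for all x, y ∈ A. -/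
/-!
Write `K` for the kernel of `P`. Since `B` is semiprime (`q b q = 0` for all `b ∈ B` forces
`q = 0`; take `b = q⋆` in a C*-algebra), the two-sided module property already gives the
one-sided ones `P (a b) = P a b` and `P (b a) = b P a`, so `K` is a `B`-bimodule and
`x y ≡ P x P y + z w` modulo `K` with `z = x - P x`, `w = y - P y ∈ K`. It remains to show
`q := P (z w) = 0` for `z, w ∈ K`. Polarizing the Jordan identity makes `(z, w) ↦ P (z w)`
antisymmetric on `K`, and moving `b ∈ B` around with the module properties and antisymmetry
shows that `q` commutes with `B`; the Jordan identity applied to `z (w z w) + (w z w) z` gives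
`2 q² = 0`. A central element of square zero in a semiprime ring vanishes.
-/

section Jordan

variable {R S : Type*}

theorem map_mul_add_mul_swap_of_map_mul_self [NonUnitalNonAssocRing R] [NonUnitalNonAssocRing S]
    {f : R →+ S} (hf : ∀ x, f (x * x) = f x * f x) (x y : R) :
    f (x * y + y * x) = f x * f y + f y * f x :=
  calc f (x * y + y * x) = f ((x + y) * (x + y)) - f (x * x) - f (y * y) := by
        rw [add_mul, mul_add, mul_add, map_add, map_add, map_add, map_add]; abel
    _ = f x * f y + f y * f x := by
        rw [hf, hf, hf, map_add, add_mul, mul_add, mul_add]; abel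

variable [NonUnitalRing R] [NonUnitalRing S] {f : R →+ S} {z w : R}

theorem map_mul_swap_of_map_eq_zero (hf : ∀ x, f (x * x) = f x * f x)
    (hz : f z = 0) (hw : f w = 0) : f (w * z) = -f (z * w) := by
  have h := map_mul_add_mul_swap_of_map_mul_self hf z w
  simp only [hz, hw, map_add, zero_mul, add_zero] at h
  exact eq_neg_of_add_eq_zero_right h

theorem map_mul_mul_self_of_map_eq_zero [IsAddTorsionFree S] (hf : ∀ x, f (x * x) = f x * f x)
    (hz : f z = 0) (hw : f w = 0) : f (z * w) * f (z * w) = 0 := by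
  have h := map_mul_add_mul_swap_of_map_mul_self hf z (w * z * w)
  rw [hz, zero_mul, mul_zero, add_zero,
    show z * (w * z * w) + w * z * w * z = z * w * (z * w) + w * z * (w * z) by noncomm_ring,
    map_add, hf, hf, map_mul_swap_of_map_eq_zero hf hz hw, neg_mul_neg, ← two_nsmul] at h
  exact (smul_eq_zero.mp h).resolve_left two_ne_zero

end Jordan

namespace NonUnitalSubring

variable {R : Type*} [NonUnitalRing R]

def IsSemiprime (B : NonUnitalSubring R) : Prop :=
  ∀ q ∈ B, (∀ b ∈ B, q * b * q = 0) → q = 0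

variable {B : NonUnitalSubring R} {q : R}

theorem IsSemiprime.eq_zero_of_forall_mul_mul_eq_zero (hB : B.IsSemiprime) (hq : q ∈ B)
    (h : ∀ b₁ ∈ B, ∀ b₂ ∈ B, b₁ * q * b₂ = 0) : q = 0 :=
  hB q hq fun b hb => hB _ (mul_mem (mul_mem hq hb) hq) fun c hc =>
    calc q * b * q * c * (q * b * q) = q * (b * q * c) * (q * b * q) := by noncomm_ring
      _ = 0 := by rw [h b hb c hc, mul_zero, zero_mul]

theorem IsSemiprime.eq_zero_of_mul_self_eq_zero (hB : B.IsSemiprime) (hq : q ∈ B)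
    (hcomm : ∀ b ∈ B, Commute b q) (h : q * q = 0) : q = 0 :=
  hB q hq fun b hb => by rw [(hcomm b hb).symm.eq, mul_assoc, h, mul_zero]

end NonUnitalSubring

theorem CStarRing.eq_zero_of_mul_star_mul_eq_zero {C : Type*} [NonUnitalNormedRing C]
    [StarRing C] [CStarRing C] {q : C} (h : q * star q * q = 0) : q = 0 := by
  have hsq : star (star q * q) * (star q * q) = 0 := by
    rw [star_mul, star_star, mul_assoc, ← mul_assoc q, h, mul_zero]
  rwa [CStarRing.star_mul_self_eq_zero_iff, CStarRing.star_mul_self_eq_zero_iff] at hsq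

theorem NonUnitalSubring.isSemiprime_comap_subtype_of_star_mem {C : Type*}
    [NonUnitalNormedRing C] [StarRing C] [CStarRing C] {S : Type*} [SetLike S C]
    [NonUnitalSubringClass S C] {A : S} {B : NonUnitalSubring C} (hBA : ∀ b ∈ B, b ∈ A)
    (hB : ∀ b ∈ B, star b ∈ B) : (B.comap (NonUnitalSubringClass.subtype A)).IsSemiprime := by
  intro q hq h
  have hq' : (q : C) ∈ B := hq
  exact Subtype.ext <| CStarRing.eq_zero_of_mul_star_mul_eq_zero <|
    congrArg Subtype.val (h ⟨star q, hBA _ (hB _ hq')⟩ (hB _ hq'))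

structure IsBimoduleProjection {R : Type*} [NonUnitalRing R] (B : NonUnitalSubring R)
    (E : R →+ R) : Prop where
  map_mem : ∀ x, E x ∈ B
  map_eq_self : ∀ b ∈ B, E b = b
  map_mul_mul : ∀ b₁ ∈ B, ∀ b₂ ∈ B, ∀ a, E (b₁ * a * b₂) = b₁ * E a * b₂

namespace IsBimoduleProjection

variable {R : Type*} [NonUnitalRing R] {B : NonUnitalSubring R} {E : R →+ R}

theorem map_mul_right (hE : IsBimoduleProjection B E) (hB : B.IsSemiprime) (a : R) {b : R}
    (hb : b ∈ B) : E (a * b) = E a * b := by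
  rw [← sub_eq_zero]
  refine hB.eq_zero_of_forall_mul_mul_eq_zero
    (sub_mem (hE.map_mem _) (mul_mem (hE.map_mem a) hb)) fun b₁ hb₁ b₂ hb₂ => ?_
  rw [mul_sub, sub_mul, ← hE.map_mul_mul _ hb₁ _ hb₂,
    show b₁ * (E a * b) * b₂ = b₁ * E a * (b * b₂) by noncomm_ring,
    ← hE.map_mul_mul _ hb₁ _ (mul_mem hb hb₂), sub_eq_zero]
  simp only [mul_assoc]

theorem map_mul_left (hE : IsBimoduleProjection B E) (hB : B.IsSemiprime) {b : R} (hb : b ∈ B)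
    (a : R) : E (b * a) = b * E a := by
  rw [← sub_eq_zero]
  refine hB.eq_zero_of_forall_mul_mul_eq_zero
    (sub_mem (hE.map_mem _) (mul_mem hb (hE.map_mem a))) fun b₁ hb₁ b₂ hb₂ => ?_
  rw [mul_sub, sub_mul, ← hE.map_mul_mul _ hb₁ _ hb₂,
    show b₁ * (b * E a) * b₂ = b₁ * b * E a * b₂ by noncomm_ring,
    ← hE.map_mul_mul _ (mul_mem hb₁ hb) _ hb₂, sub_eq_zero]
  simp only [mul_assoc]

variable {z w : R}

theorem commute_map_mul_of_map_eq_zero (hE : IsBimoduleProjection B E) (hB : B.IsSemiprime)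
    (hJ : ∀ x, E (x * x) = E x * E x) (hz : E z = 0) (hw : E w = 0) {b : R} (hb : b ∈ B) :
    Commute b (E (z * w)) := by
  have hbz : E (b * z) = 0 := by rw [hE.map_mul_left hB hb, hz, mul_zero]
  have hwb : E (w * b) = 0 := by rw [hE.map_mul_right hB w hb, hw, zero_mul]
  calc b * E (z * w) = E (b * z * w) := by rw [mul_assoc, hE.map_mul_left hB hb]
    _ = -E (w * (b * z)) := map_mul_swap_of_map_eq_zero hJ hw hbz
    _ = E (z * (w * b)) := by
        rw [← mul_assoc, map_mul_swap_of_map_eq_zero hJ hz hwb, neg_neg]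
    _ = E (z * w) * b := by rw [← mul_assoc, hE.map_mul_right hB _ hb]

theorem map_mul_eq_zero_of_map_eq_zero [IsAddTorsionFree R] (hE : IsBimoduleProjection B E)
    (hB : B.IsSemiprime) (hJ : ∀ x, E (x * x) = E x * E x) (hz : E z = 0) (hw : E w = 0) :
    E (z * w) = 0 :=
  hB.eq_zero_of_mul_self_eq_zero (hE.map_mem _)
    (fun _ hb => hE.commute_map_mul_of_map_eq_zero hB hJ hz hw hb)
    (map_mul_mul_self_of_map_eq_zero hJ hz hw)

theorem map_mul [IsAddTorsionFree R] (hE : IsBimoduleProjection B E) (hB : B.IsSemiprime)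
    (hJ : ∀ x, E (x * x) = E x * E x) (x y : R) : E (x * y) = E x * E y := by
  have hx : E (x - E x) = 0 := by rw [map_sub, hE.map_eq_self _ (hE.map_mem x), sub_self]
  have hy : E (y - E y) = 0 := by rw [map_sub, hE.map_eq_self _ (hE.map_mem y), sub_self]
  rw [show x * y = (x - E x) * (y - E y) + (x - E x) * E y + E x * (y - E y) + E x * E y by
      noncomm_ring,
    map_add, map_add, map_add, hE.map_mul_eq_zero_of_map_eq_zero hB hJ hx hy,
    hE.map_mul_right hB _ (hE.map_mem y), hE.map_mul_left hB (hE.map_mem x), hx, hy,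
    hE.map_eq_self _ (mul_mem (hE.map_mem x) (hE.map_mem y))]
  simp

end IsBimoduleProjection

theorem jordan_bimodule_projection_is_hom_general
    {C : Type*} [NonUnitalCStarAlgebra C]
    (A B : NonUnitalSubalgebra ℂ C)
    (hBstar : ∀ b ∈ B, star b ∈ B)
    (hBA : B ≤ A)
    (P : ↥A →ₗ[ℂ] C)
    (hPrange : ∀ x : ↥A, P x ∈ B)
    (hPJordan : ∀ x : ↥A, P (x * x) = P x * P x)
    (hPid : ∀ b : C, ∀ hb : b ∈ B, P ⟨b, hBA hb⟩ = b)
    (hPbimod : ∀ b₁ ∈ B, ∀ b₂ ∈ B, ∀ a : ↥A, ∀ h : b₁ * (a : C) * b₂ ∈ A,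
      P ⟨b₁ * (a : C) * b₂, h⟩ = b₁ * P a * b₂) :
    ∀ x y : ↥A, P (x * y) = P x * P y := by
  intro x y
  let E : A →+ A :=
    AddMonoidHom.mk' (fun a => ⟨P a, hBA (hPrange a)⟩) fun a a' => Subtype.ext (map_add P a a')
  have hE : IsBimoduleProjection (B.toNonUnitalSubring.comap (NonUnitalSubringClass.subtype A)) E :=
    { map_mem := hPrange
      map_eq_self := fun b hb => Subtype.ext (hPid b hb)
      map_mul_mul := fun b₁ hb₁ b₂ hb₂ a => Subtype.ext (hPbimod _ hb₁ _ hb₂ a _) }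
  have : IsAddTorsionFree A := .of_isTorsionFree ℂ A
  exact congrArg Subtype.val <| hE.map_mul
    (NonUnitalSubring.isSemiprime_comap_subtype_of_star_mem (fun _ hb => hBA hb) hBstar)
    (fun a => Subtype.ext (hPJordan a)) x y

/-- Let `C` be a C*-algebra, `A` a norm-closed subalgebra of `C`, and `B` a
norm-closed selfadjoint subalgebra of `A`. Let `P : A → B` be a linear Jordan homomorphism
restricting to the identity on `B` which is a `B`-bimodule map. Then `P` is an algebra
homomorphism. -/
theorem jordan_bimodule_projection_is_hom
    {C : Type*} [NonUnitalCStarAlgebra C] [StarModule ℂ C]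
    (A B : NonUnitalSubalgebra ℂ C)
    (hAclosed : IsClosed (A : Set C))
    (hBclosed : IsClosed (B : Set C))
    (hBstar : ∀ b ∈ B, star b ∈ B)
    (hBA : B ≤ A)
    (P : ↥A →ₗ[ℂ] C)
    (hPrange : ∀ x : ↥A, P x ∈ B)
    (hPJordan : ∀ x : ↥A, P (x * x) = P x * P x)
    (hPid : ∀ b : C, ∀ hb : b ∈ B, P ⟨b, hBA hb⟩ = b)
    (hPbimod : ∀ b₁ ∈ B, ∀ b₂ ∈ B, ∀ a : ↥A, ∀ h : b₁ * (a : C) * b₂ ∈ A,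
      P ⟨b₁ * (a : C) * b₂, h⟩ = b₁ * P a * b₂) :
    ∀ x y : ↥A, P (x * y) = P x * P y :=
  jordan_bimodule_projection_is_hom_general A B hBstar hBA P hPrange hPJordan hPid hPbimod
end

section
/- Let M be a unital C*-algebra with a tracial state τ, let D be a C*-subalgebra of M on which τ is faithful, let A be a unital subalgebra of M containing D, and let Φ : A → D be a unital contractive linear D-bimodule map with τ(Φ(a)) = τ(a) for all a ∈ A. Then Φ is an algebra homomorphism if and only if for all complex coefficients c₀, …, c₆, all d ∈ D and all a ∈ A, ‖q(d, Φ(a))‖₂ ≤ ‖q(d, a)‖₂, where q(s, t) = c₀·1 + c₁ s + c₂ t + c₃ s² + c₄ st + c₅ ts + c₆ t² (a noncommutative polynomial supported on words of length at most 2 in the two variables) and ‖y‖₂ = τ(y*y)^{1/2}. -/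
open scoped ComplexOrder

/-- The noncommutative quadratic polynomial
`q(s,t) = c₀·1 + c₁ s + c₂ t + c₃ s² + c₄ st + c₅ ts + c₆ t²`. -/
noncomputable def qpoly {M : Type*} [Ring M] [Algebra ℂ M] (c : Fin 7 → ℂ) (s t : M) : M :=
  c 0 • (1 : M) + c 1 • s + c 2 • t + c 3 • (s * s) + c 4 • (s * t) + c 5 • (t * s) +
    c 6 • (t * t)

/-- The `L²`-seminorm `‖y‖₂ = τ(y*y)^{1/2}` associated to a state `τ`. -/
noncomputable def l2seminorm {M : Type*} [Ring M] [StarRing M] [Algebra ℂ M]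
    (τ : M →ₗ[ℂ] ℂ) (y : M) : ℝ :=
  Real.sqrt ((τ (star y * y)).re)

/-!
The seminorm `‖y‖₂` is the norm of `y` in the GNS pre-Hilbert space of `τ`. Since `Φ` is a
`τ`-preserving `D`-bimodule map, `z - Φ z` is orthogonal to `D`, so `Φ` is the orthogonal
projection onto `D` and is `‖·‖₂`-contractive; a homomorphism satisfies
`Φ (q(d, a)) = q(d, Φ a)`, which gives one direction.

Conversely, for `a` in the kernel of `Φ` the polynomial `q(s, t) = s - t·t²` with
`d = Φ(a²)` says that `‖Φ(a²)‖₂ ≤ ‖Φ(a²) - t·a²‖₂` for all `t > 0`; as `Φ(a²)` is the projection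
of `a²`, this forces `Φ(a²) = 0`. Polarizing, `Φ(xb + bx) = 0` for `x, b` in the kernel, and for
`b = y·Φ(xy)*` the trace property turns this into `τ(Φ(xy) Φ(xy)*) = 0`. So the kernel is closed
under products, and writing `x = (x - Φ x) + Φ x` shows that `Φ` is multiplicative.
-/

open scoped InnerProductSpace
open Filter Topology

theorem map_qpoly {R S F : Type*} [Ring R] [Algebra ℂ R] [Ring S] [Algebra ℂ S] [FunLike F R S]
    [AlgHomClass F ℂ R S] (φ : F) (c : Fin 7 → ℂ) (s t : R) :
    φ (qpoly c s t) = qpoly c (φ s) (φ t) := by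
  simp [qpoly]

theorem qpoly_sub_smul_mul_self {R : Type*} [Ring R] [Algebra ℂ R] (t : ℂ) (s u : R) :
    qpoly ![0, 1, 0, 0, 0, 0, -t] s u = s - t • (u * u) := by
  simp [qpoly, sub_eq_add_neg]

theorem nonpos_of_forall_pos_le_mul {a b : ℝ} (h : ∀ t : ℝ, 0 < t → a ≤ t * b) : a ≤ 0 := by
  have hlim : Tendsto (fun t : ℝ => t * b) (𝓝[>] 0) (𝓝 0) :=
    tendsto_nhdsWithin_of_tendsto_nhds ((continuous_mul_const b).tendsto' 0 0 (zero_mul b))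
  exact ge_of_tendsto hlim (eventually_nhdsWithin_of_forall h)

theorem norm_eq_zero_of_inner_sub_eq_zero_of_norm_le {𝕜 E : Type*} [RCLike 𝕜]
    [SeminormedAddCommGroup E] [InnerProductSpace 𝕜 E] {u w : E} (horth : ⟪u, w - u⟫_𝕜 = 0)
    (hle : ∀ t : ℝ, 0 < t → ‖u‖ ≤ ‖u - (t : 𝕜) • w‖) : ‖u‖ = 0 := by
  have hre : RCLike.re ⟪u, w⟫_𝕜 = ‖u‖ ^ 2 := by
    rw [inner_sub_right, sub_eq_zero] at horth
    rw [horth, inner_self_eq_norm_sq]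
  have key : ∀ t : ℝ, 0 < t → 2 * ‖u‖ ^ 2 ≤ t * ‖w‖ ^ 2 := by
    intro t ht
    have h := pow_le_pow_left₀ (norm_nonneg u) (hle t ht) 2
    rw [@norm_sub_sq 𝕜, inner_smul_right, RCLike.re_ofReal_mul, hre, norm_smul,
      RCLike.norm_ofReal, abs_of_pos ht] at h
    nlinarith
  nlinarith [nonpos_of_forall_pos_le_mul key, norm_nonneg u]

theorem map_mul_add_map_mul_eq_zero {R S F : Type*} [Ring R] [AddCommGroup S] [FunLike F R S]
    [AddMonoidHomClass F R S] (φ : F) (hsq : ∀ a, φ a = 0 → φ (a * a) = 0) {x y : R}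
    (hx : φ x = 0) (hy : φ y = 0) : φ (x * y) + φ (y * x) = 0 := by
  have hxy := hsq (x + y) (by rw [map_add, hx, hy, add_zero])
  rwa [add_mul, mul_add, mul_add, map_add, map_add, map_add, hsq x hx, hsq y hy, zero_add,
    add_zero] at hxy

section Bimodule

variable {R M : Type*} [CommRing R] [Ring M] [Algebra R M] {D A : Subalgebra R M} {hDA : D ≤ A}
  {Φ : ↥A →ₗ[R] M}

def IsBimoduleMap (hDA : D ≤ A) (Φ : ↥A →ₗ[R] M) : Prop :=
  ∀ d₁ : M, ∀ hd₁ : d₁ ∈ D, ∀ d₂ : M, ∀ hd₂ : d₂ ∈ D, ∀ a : ↥A,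
    Φ ⟨d₁ * (a : M) * d₂, mul_mem (mul_mem (hDA hd₁) a.2) (hDA hd₂)⟩ = d₁ * Φ a * d₂

namespace IsBimoduleMap

theorem map_mul_left (hΦ : IsBimoduleMap hDA Φ) {d : M} (hd : d ∈ D) (a : ↥A) :
    Φ (⟨d, hDA hd⟩ * a) = d * Φ a := by
  have h := hΦ d hd 1 (one_mem D) a
  simp only [mul_one] at h
  exact h

theorem map_mul_right (hΦ : IsBimoduleMap hDA Φ) {d : M} (hd : d ∈ D) (a : ↥A) :
    Φ (a * ⟨d, hDA hd⟩) = Φ a * d := by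
  have h := hΦ 1 (one_mem D) d hd a
  simp only [one_mul] at h
  exact h

theorem map_of_mem (hΦ : IsBimoduleMap hDA Φ) (hΦ1 : Φ 1 = 1) {d : M} (hd : d ∈ D) :
    Φ ⟨d, hDA hd⟩ = d := by
  simpa [hΦ1] using hΦ.map_mul_left hd 1

theorem map_mul_of_ker_mul (hΦ : IsBimoduleMap hDA Φ) (hΦ1 : Φ 1 = 1) (hΦD : ∀ a, Φ a ∈ D)
    (hker : ∀ x y : ↥A, Φ x = 0 → Φ y = 0 → Φ (x * y) = 0) (x y : ↥A) :
    Φ (x * y) = Φ x * Φ y := by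
  set x₀ : ↥A := ⟨Φ x, hDA (hΦD x)⟩
  set y₀ : ↥A := ⟨Φ y, hDA (hΦD y)⟩
  have hx : Φ (x - x₀) = 0 := by rw [map_sub, hΦ.map_of_mem hΦ1 (hΦD x), sub_self]
  have hy : Φ (y - y₀) = 0 := by rw [map_sub, hΦ.map_of_mem hΦ1 (hΦD y), sub_self]
  have hsplit : x * y = (x - x₀) * (y - y₀) + (x - x₀) * y₀ + x₀ * (y - y₀) + x₀ * y₀ := by
    noncomm_ring
  rw [hsplit, map_add, map_add, map_add, hker _ _ hx hy, hΦ.map_mul_right (hΦD y),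
    hΦ.map_mul_left (hΦD x), hΦ.map_mul_left (hΦD x), hΦ.map_of_mem hΦ1 (hΦD y), hx, hy]
  simp

theorem apply_mul_map {N : Type*} (hΦ : IsBimoduleMap hDA Φ) (g : M → N)
    (hΦg : ∀ a, g (Φ a) = g a) {d : M} (hd : d ∈ D) (z : ↥A) : g (d * Φ z) = g (d * z) := by
  rw [← hΦ.map_mul_left hd, hΦg]
  rfl

theorem map_mul_eq_zero [StarRing M] {F : Type*} [FunLike F M ℂ] [AddMonoidHomClass F M ℂ]
    (hΦ : IsBimoduleMap hDA Φ) (f : F) (hΦf : ∀ a, f (Φ a) = f a)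
    (hf : ∀ x y, f (x * y) = f (y * x)) (hDstar : ∀ d ∈ D, star d ∈ D) (hΦD : ∀ a, Φ a ∈ D)
    (hfaithful : ∀ d ∈ D, f (star d * d) = 0 → d = 0)
    (hsq : ∀ a, Φ a = 0 → Φ (a * a) = 0) {x y : ↥A} (hx : Φ x = 0) (hy : Φ y = 0) :
    Φ (x * y) = 0 := by
  set e := Φ (x * y)
  have he : star e ∈ D := hDstar _ (hΦD _)
  set b : ↥A := y * ⟨star e, hDA he⟩
  have hb : Φ b = 0 := by rw [hΦ.map_mul_right he, hy, zero_mul]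
  have hxb : Φ (x * b) = e * star e := by rw [← mul_assoc, hΦ.map_mul_right he]
  have hpol := congrArg f (map_mul_add_map_mul_eq_zero Φ hsq hx hb)
  have htrace : f (Φ (b * x)) = f (Φ (x * b)) := by rw [hΦf, hΦf]; exact hf _ _
  rw [map_add, htrace, hxb, map_zero, ← two_mul] at hpol
  have hstar : star e = 0 :=
    hfaithful _ he (by simpa using (mul_eq_zero.mp hpol).resolve_left two_ne_zero)
  simpa using hstar

end IsBimoduleMap

end Bimodule

section Tracial

variable {M : Type*} [CStarAlgebra M] [PartialOrder M] [StarOrderedRing M] (f : M →ₚ[ℂ] ℂ)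
  {D A : Subalgebra ℂ M} {hDA : D ≤ A} {Φ : ↥A →ₗ[ℂ] M}

theorem PositiveLinearMap.apply_star_mul_self_eq_zero_of_norm_toPreGNS_eq_zero {x : M}
    (hx : ‖f.toPreGNS x‖ = 0) : f (star x * x) = 0 := by
  simpa [hx] using (f.preGNS_norm_sq (f.toPreGNS x)).symm

namespace IsBimoduleMap

theorem inner_toPreGNS_sub_map (hΦ : IsBimoduleMap hDA Φ) (hΦf : ∀ a, f (Φ a) = f a)
    (hDstar : ∀ d ∈ D, star d ∈ D) {d : M} (hd : d ∈ D) (z : ↥A) :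
    ⟪f.toPreGNS d, f.toPreGNS (z - Φ z)⟫_ℂ = 0 := by
  rw [f.preGNS_inner_def, f.ofPreGNS_toPreGNS, f.ofPreGNS_toPreGNS, mul_sub, map_sub,
    hΦ.apply_mul_map f hΦf (hDstar d hd), sub_self]

theorem norm_toPreGNS_map_le (hΦ : IsBimoduleMap hDA Φ) (hΦf : ∀ a, f (Φ a) = f a)
    (hDstar : ∀ d ∈ D, star d ∈ D) (hΦD : ∀ a, Φ a ∈ D) (z : ↥A) :
    ‖f.toPreGNS (Φ z)‖ ≤ ‖f.toPreGNS z‖ := by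
  have hpyth := norm_add_sq_eq_norm_sq_add_norm_sq_of_inner_eq_zero _ _
    (hΦ.inner_toPreGNS_sub_map f hΦf hDstar (hΦD z) z)
  rw [← map_add, add_sub_cancel] at hpyth
  nlinarith [norm_nonneg (f.toPreGNS (Φ z)), norm_nonneg (f.toPreGNS z),
    norm_nonneg (f.toPreGNS (z - Φ z))]

theorem map_eq_zero_of_norm_le_norm_sub_smul (hΦ : IsBimoduleMap hDA Φ)
    (hΦf : ∀ a, f (Φ a) = f a) (hDstar : ∀ d ∈ D, star d ∈ D) (hΦD : ∀ a, Φ a ∈ D)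
    (hfaithful : ∀ d ∈ D, f (star d * d) = 0 → d = 0) {z : ↥A}
    (hle : ∀ t : ℝ, 0 < t → ‖f.toPreGNS (Φ z)‖ ≤ ‖f.toPreGNS (Φ z - (t : ℂ) • (z : M))‖) :
    Φ z = 0 := by
  refine hfaithful _ (hΦD z) (f.apply_star_mul_self_eq_zero_of_norm_toPreGNS_eq_zero ?_)
  refine norm_eq_zero_of_inner_sub_eq_zero_of_norm_le (w := f.toPreGNS z)
    (by simpa using hΦ.inner_toPreGNS_sub_map f hΦf hDstar (hΦD z) z) fun t ht => ?_
  simpa only [map_sub, map_smul, RCLike.ofReal_eq_complex_ofReal] using hle t ht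

end IsBimoduleMap

end Tracial

theorem hom_iff_quadratic_l2_contractive_general
    {M : Type*} [CStarAlgebra M] [PartialOrder M] [StarOrderedRing M]
    (τ : M →ₗ[ℂ] ℂ)
    (hτpos : ∀ a : M, 0 ≤ a → 0 ≤ τ a)
    (hτtr : ∀ a b : M, τ (a * b) = τ (b * a))
    (D A : Subalgebra ℂ M)
    (hDstar : ∀ d ∈ D, star d ∈ D)
    (hτfaithfulD : ∀ d ∈ D, τ (star d * d) = 0 → d = 0)
    (hDA : D ≤ A)
    (Φ : ↥A →ₗ[ℂ] M)
    (hΦD : ∀ a : ↥A, Φ a ∈ D)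
    (hΦ1 : Φ 1 = 1)
    (hΦbimod : ∀ d₁ : M, ∀ hd₁ : d₁ ∈ D, ∀ d₂ : M, ∀ hd₂ : d₂ ∈ D, ∀ a : ↥A,
      Φ ⟨d₁ * (a : M) * d₂, mul_mem (mul_mem (hDA hd₁) a.2) (hDA hd₂)⟩ = d₁ * Φ a * d₂)
    (hΦτ : ∀ a : ↥A, τ (Φ a) = τ (a : M)) :
    (∀ x y : ↥A, Φ (x * y) = Φ x * Φ y) ↔
      (∀ c : Fin 7 → ℂ, ∀ d ∈ D, ∀ a : ↥A,
        l2seminorm τ (qpoly c d (Φ a)) ≤ l2seminorm τ (qpoly c d (a : M))) := by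
  set f := PositiveLinearMap.mk₀ τ hτpos
  have hΦ : IsBimoduleMap hDA Φ := hΦbimod
  have hl2 (y : M) : l2seminorm τ y = ‖f.toPreGNS y‖ := rfl
  constructor
  · intro hmul c d hd a
    have hqA : qpoly c d (a : M) = (qpoly c ⟨d, hDA hd⟩ a : ↥A) :=
      (map_qpoly A.val c (⟨d, hDA hd⟩ : ↥A) a).symm
    have hqΦ : qpoly c d (Φ a) = Φ (qpoly c ⟨d, hDA hd⟩ a) := by
      simpa [hΦ.map_of_mem hΦ1 hd] using
        (map_qpoly (AlgHom.ofLinearMap Φ hΦ1 hmul) c (⟨d, hDA hd⟩ : ↥A) a).symm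
    rw [hl2, hl2, hqA, hqΦ]
    exact hΦ.norm_toPreGNS_map_le f hΦτ hDstar hΦD _
  · intro hq
    refine hΦ.map_mul_of_ker_mul hΦ1 hΦD fun x y hx hy => ?_
    refine hΦ.map_mul_eq_zero f hΦτ hτtr hDstar hΦD hτfaithfulD (fun a ha => ?_) hx hy
    refine hΦ.map_eq_zero_of_norm_le_norm_sub_smul f hΦτ hDstar hΦD hτfaithfulD fun t _ => ?_
    simpa [hl2, qpoly_sub_smul_mul_self, ha] using hq ![0, 1, 0, 0, 0, 0, -t] _ (hΦD (a * a)) a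

/-- Let `M` be a unital C*-algebra with a tracial state `τ`, `D` a
C*-subalgebra of `M` on which `τ` is faithful, `A` a unital subalgebra of `M` containing `D`,
and `Φ : A → D` a unital contractive linear `D`-bimodule map with `τ ∘ Φ = τ` on `A`. Then `Φ`
is an algebra homomorphism if and only if `‖q(d, Φ(a))‖₂ ≤ ‖q(d, a)‖₂` for every noncommutative
polynomial `q` supported on words of length at most 2, every `d ∈ D` and every `a ∈ A`. -/
theorem hom_iff_quadratic_l2_contractive
    {M : Type*} [CStarAlgebra M] [PartialOrder M] [StarOrderedRing M]
    (τ : M →ₗ[ℂ] ℂ)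
    (hτ1 : τ 1 = 1)
    (hτpos : ∀ a : M, 0 ≤ a → 0 ≤ τ a)
    (hτtr : ∀ a b : M, τ (a * b) = τ (b * a))
    (D A : Subalgebra ℂ M)
    (hDstar : ∀ d ∈ D, star d ∈ D)
    (hDclosed : IsClosed (D : Set M))
    (hτfaithfulD : ∀ d ∈ D, τ (star d * d) = 0 → d = 0)
    (hDA : D ≤ A)
    (Φ : ↥A →ₗ[ℂ] M)
    (hΦD : ∀ a : ↥A, Φ a ∈ D)
    (hΦ1 : Φ 1 = 1)
    (hΦcontr : ∀ a : ↥A, ‖Φ a‖ ≤ ‖(a : M)‖)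
    (hΦbimod : ∀ d₁ : M, ∀ hd₁ : d₁ ∈ D, ∀ d₂ : M, ∀ hd₂ : d₂ ∈ D, ∀ a : ↥A,
      Φ ⟨d₁ * (a : M) * d₂, mul_mem (mul_mem (hDA hd₁) a.2) (hDA hd₂)⟩ = d₁ * Φ a * d₂)
    (hΦτ : ∀ a : ↥A, τ (Φ a) = τ (a : M)) :
    (∀ x y : ↥A, Φ (x * y) = Φ x * Φ y) ↔
      (∀ c : Fin 7 → ℂ, ∀ d ∈ D, ∀ a : ↥A,
        l2seminorm τ (qpoly c d (Φ a)) ≤ l2seminorm τ (qpoly c d (a : M))) :=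
  hom_iff_quadratic_l2_contractive_general τ hτpos hτtr D A hDstar hτfaithfulD hDA Φ hΦD hΦ1 hΦbimod
    hΦτ
end

section
/- Let H be a complex Hilbert space and let (Sₙ), (Tₙ) be sequences of strict contractions in B(H) (‖Sₙ‖ < 1, ‖Tₙ‖ < 1 for all n). If either (i) ‖Sₙ − Tₙ‖ → 2, or (ii) there is a constant c < 1 with ‖Sₙ‖ ≤ c for all n and ‖Tₙ‖ → 1, then ρ(Sₙ, Tₙ) → ∞, where ρ is the hyperbolic distance on the open unit ball of B(H). -/
/-!
For strict contractions `a`, `y` the Möbius map `M = T_a(y)` satisfies the classical identity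
`1 - M* M = u* (1 - y* y) u` with `u = (1 + a* y)⁻¹ (1 - a* a)^{1/2}` invertible; it is a purely
ring-theoretic consequence of `(1 - a* a)⁻¹ a* = a* (1 - a a*)⁻¹`. On Hilbert-space vectors it
gives `‖M‖ < 1`, since `u` is bounded below, and, at `u⁻¹ η` for a unit vector `η` with
`a = -S`, `y = T`, the bound `(1 - ‖M‖²) ‖(1 - S* T) η‖² ≤ 1 - ‖T η‖²`, since
`‖(1 - a* a)^{1/2}‖ ≤ 1`.
In both cases of the theorem there are unit vectors `ηₙ` with `‖Tₙ ηₙ‖ → 1` while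
`‖(1 - Sₙ* Tₙ) ηₙ‖` stays bounded below (by `‖(Sₙ - Tₙ) ηₙ‖² / 2 → 2`, resp. by `1 - c`), so
`‖T_{-Sₙ}(Tₙ)‖ → 1` and `ρ(Sₙ, Tₙ) = artanh ‖T_{-Sₙ}(Tₙ)‖ → ∞`.
-/

/-- The inverse hyperbolic tangent `artanh t = (1/2)·log((1+t)/(1-t))`. -/
noncomputable def artanh (t : ℝ) : ℝ := Real.log ((1 + t) / (1 - t)) / 2

/-- `(1 - x x*)^{-1/2}`-type inverse square roots via the continuous functional calculus. -/
noncomputable def cfcInvSqrt {B : Type*} [CStarAlgebra B] (a : B) : B :=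
  cfc (fun t : ℝ => (Real.sqrt t)⁻¹) a

/-- Square roots via the continuous functional calculus. -/
noncomputable def cfcSqrt {B : Type*} [CStarAlgebra B] (a : B) : B :=
  cfc Real.sqrt a

/-- The Möbius map `T_x(y) = (1 − x x*)^{-1/2} (x + y)(1 + x* y)^{-1} (1 − x* x)^{1/2}`. -/
noncomputable def mobiusMap {B : Type*} [CStarAlgebra B] (x y : B) : B :=
  cfcInvSqrt (1 - x * star x) * (x + y) * Ring.inverse (1 + star x * y) *
    cfcSqrt (1 - star x * x)

/-- The hyperbolic distance
`ρ(x,y) = artanh ‖(1 − x x*)^{-1/2} (x − y)(1 − x* y)^{-1} (1 − x* x)^{1/2}‖ = artanh ‖T_{−x}(y)‖`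
on the open unit ball of a unital C*-algebra. -/
noncomputable def hypDist {B : Type*} [CStarAlgebra B] (x y : B) : ℝ :=
  artanh ‖cfcInvSqrt (1 - x * star x) * (x - y) * Ring.inverse (1 - star x * y) *
    cfcSqrt (1 - star x * x)‖

open Filter Topology

section CFC

variable {B : Type*} [CStarAlgebra B] {a : B}

lemma spectrum_one_sub_star_mul_self_subset_Icc (x : B) :
    spectrum ℝ (1 - star x * x) ⊆ Set.Icc (1 - ‖x‖ ^ 2) 1 := by
  intro t ht
  rw [← algebraMap.coe_one (R := ℝ), ← spectrum.singleton_sub_eq] at ht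
  obtain ⟨r, hr, s, hs, rfl⟩ := ht
  rw [Set.mem_singleton_iff.1 hr]
  rcases subsingleton_or_nontrivial B with hB | hB
  · simp [spectrum.of_subsingleton] at hs
  have hs0 : 0 ≤ s := spectrum_star_mul_self_nonneg s hs
  have hs1 : s ≤ ‖x‖ ^ 2 := by
    simpa [abs_of_nonneg hs0, CStarRing.norm_star_mul_self, sq] using
      spectrum.norm_le_norm_of_mem hs
  constructor <;> linarith

lemma spectrum_one_sub_star_mul_self_pos {x : B} (hx : ‖x‖ < 1) :
    ∀ t ∈ spectrum ℝ (1 - star x * x), 0 < t := fun t ht => by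
  have := (spectrum_one_sub_star_mul_self_subset_Icc x ht).1
  nlinarith [norm_nonneg x]

lemma cfcSqrt_mul_self (ha : IsSelfAdjoint a) (h : ∀ t ∈ spectrum ℝ a, 0 ≤ t) :
    cfcSqrt a * cfcSqrt a = a := by
  rw [cfcSqrt, ← cfc_mul _ _ a]
  conv_rhs => rw [← cfc_id ℝ a]
  exact cfc_congr fun t ht => Real.mul_self_sqrt (h t ht)

lemma cfcInvSqrt_mul_cfcSqrt (ha : IsSelfAdjoint a) (h : ∀ t ∈ spectrum ℝ a, 0 < t) :
    cfcInvSqrt a * cfcSqrt a = 1 := by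
  have hcont : ContinuousOn (fun t : ℝ => (Real.sqrt t)⁻¹) (spectrum ℝ a) :=
    Real.continuous_sqrt.continuousOn.inv₀ fun t ht => (Real.sqrt_pos.2 (h t ht)).ne'
  rw [cfcInvSqrt, cfcSqrt, ← cfc_mul _ _ a, ← cfc_one ℝ a]
  exact cfc_congr fun t ht => inv_mul_cancel₀ (Real.sqrt_pos.2 (h t ht)).ne'

lemma cfcSqrt_mul_cfcInvSqrt (ha : IsSelfAdjoint a) (h : ∀ t ∈ spectrum ℝ a, 0 < t) :
    cfcSqrt a * cfcInvSqrt a = 1 := by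
  rw [cfcSqrt, cfcInvSqrt, ← (cfc_commute_cfc _ _ a).eq]
  exact cfcInvSqrt_mul_cfcSqrt ha h

lemma norm_cfcSqrt_le_one (h : ∀ t ∈ spectrum ℝ a, t ≤ 1) : ‖cfcSqrt a‖ ≤ 1 :=
  norm_cfc_le zero_le_one fun t ht => by
    simpa [abs_of_nonneg (Real.sqrt_nonneg t)] using Real.sqrt_le_one.2 (h t ht)

end CFC

lemma one_add_mul_mul_one_add_eq {R : Type*} [Ring R] (a b y z E F : R)
    (hE : E * (1 - b * a) = 1) (hE' : (1 - b * a) * E = 1)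
    (hF : F * (1 - a * b) = 1) (hF' : (1 - a * b) * F = 1) :
    (1 + z * a) * E * (1 + b * y) = (b + z) * F * (a + y) + 1 - z * y := by
  have haE : a * E = F * a := calc
    a * E = F * (1 - a * b) * (a * E) := by rw [hF, one_mul]
    _ = F * a * ((1 - b * a) * E) := by noncomm_ring
    _ = F * a := by rw [hE', mul_one]
  have hEb : E * b = b * F := calc
    E * b = E * b * ((1 - a * b) * F) := by rw [hF', mul_one]
    _ = E * (1 - b * a) * (b * F) := by noncomm_ring
    _ = b * F := by rw [hE, one_mul]
  have hbFa : b * (F * a) = E - 1 := by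
    rw [← haE, show b * (a * E) = E - (1 - b * a) * E by noncomm_ring, hE']
  have haEb : a * (b * F) = F - 1 := by
    rw [show a * (b * F) = F - (1 - a * b) * F by noncomm_ring, hF']
  calc (1 + z * a) * E * (1 + b * y)
      = E + E * b * y + z * (a * E) + z * (a * (E * b)) * y := by noncomm_ring
    _ = (E - 1) + b * F * y + z * F * a + z * F * y + 1 - z * y := by
      rw [haE, hEb, haEb]; noncomm_ring
    _ = (b + z) * F * (a + y) + 1 - z * y := by rw [← hbFa]; noncomm_ring

section Mobius

variable {B : Type*} [CStarAlgebra B] {a y : B}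

lemma isUnit_one_add_star_mul (ha : ‖a‖ < 1) (hy : ‖y‖ < 1) : IsUnit (1 + star a * y) := by
  have h : ‖-(star a * y)‖ < 1 := by
    rw [norm_neg]
    refine (norm_mul_le _ _).trans_lt ?_
    rw [norm_star]
    exact mul_lt_one_of_nonneg_of_lt_one_left (norm_nonneg a) ha hy.le
  simpa using isUnit_one_sub_of_norm_lt_one h

lemma cfcInvSqrt_mul_self_mul (ha : IsSelfAdjoint a) (h : ∀ t ∈ spectrum ℝ a, 0 < t) :
    cfcInvSqrt a * cfcInvSqrt a * a = 1 := by
  nth_rw 3 [← cfcSqrt_mul_self ha fun t ht => (h t ht).le]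
  rw [← mul_assoc, mul_assoc (cfcInvSqrt a) (cfcInvSqrt a), cfcInvSqrt_mul_cfcSqrt ha h, mul_one,
    cfcInvSqrt_mul_cfcSqrt ha h]

lemma mul_cfcInvSqrt_mul_self (ha : IsSelfAdjoint a) (h : ∀ t ∈ spectrum ℝ a, 0 < t) :
    a * (cfcInvSqrt a * cfcInvSqrt a) = 1 := by
  nth_rw 1 [← cfcSqrt_mul_self ha fun t ht => (h t ht).le]
  rw [← mul_assoc, mul_assoc (cfcSqrt a) (cfcSqrt a), cfcSqrt_mul_cfcInvSqrt ha h, mul_one,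
    cfcSqrt_mul_cfcInvSqrt ha h]

noncomputable def mobiusFactor (a y : B) : B :=
  Ring.inverse (1 + star a * y) * cfcSqrt (1 - star a * a)

lemma one_sub_star_mobiusMap_mul_self (ha : ‖a‖ < 1) (hy : ‖y‖ < 1) :
    1 - star (mobiusMap a y) * mobiusMap a y =
      star (mobiusFactor a y) * (1 - star y * y) * mobiusFactor a y := by
  have hq := (IsSelfAdjoint.one B).sub (IsSelfAdjoint.star_mul_self a)
  have hq_pos := spectrum_one_sub_star_mul_self_pos ha
  have hp := (IsSelfAdjoint.one B).sub (IsSelfAdjoint.star_mul_self (star a))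
  have hp_pos := spectrum_one_sub_star_mul_self_pos (x := star a) (by rwa [norm_star])
  rw [star_star] at hp hp_pos
  set C := cfcSqrt (1 - star a * a)
  set E := cfcInvSqrt (1 - star a * a) * cfcInvSqrt (1 - star a * a)
  set F := cfcInvSqrt (1 - a * star a) * cfcInvSqrt (1 - a * star a)
  set R := Ring.inverse (1 + star a * y)
  have hC : IsSelfAdjoint C := cfc_predicate _ _
  have hAp : IsSelfAdjoint (cfcInvSqrt (1 - a * star a)) := cfc_predicate _ _
  have hCEC : C * E * C = 1 := by
    simp only [C, E, mul_assoc]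
    rw [cfcInvSqrt_mul_cfcSqrt hq hq_pos, mul_one, cfcSqrt_mul_cfcInvSqrt hq hq_pos]
  have hR : (1 + star a * y) * R = 1 := Ring.mul_inverse_cancel _ (isUnit_one_add_star_mul ha hy)
  have hR' : star R * (1 + star y * a) = 1 := by
    simpa using congrArg star hR
  have hcore := one_add_mul_mul_one_add_eq a (star a) y (star y) E F
    (cfcInvSqrt_mul_self_mul hq hq_pos) (mul_cfcInvSqrt_mul_self hq hq_pos)
    (cfcInvSqrt_mul_self_mul hp hp_pos) (mul_cfcInvSqrt_mul_self hp hp_pos)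
  have hM : star (mobiusMap a y) * mobiusMap a y =
      C * star R * ((star a + star y) * F * (a + y)) * R * C := by
    simp only [mobiusMap, star_mul, star_add, hC.star_eq, hAp.star_eq, C, F, R]
    noncomm_ring
  calc 1 - star (mobiusMap a y) * mobiusMap a y
      = C * E * C - C * star R * ((1 + star y * a) * E * (1 + star a * y) - (1 - star y * y))
          * R * C := by rw [hM, hcore, hCEC]; noncomm_ring
    _ = C * E * C - C * (star R * (1 + star y * a)) * E * ((1 + star a * y) * R) * C
          + star (R * C) * (1 - star y * y) * (R * C) := by
      rw [star_mul, hC.star_eq]; noncomm_ring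
    _ = star (mobiusFactor a y) * (1 - star y * y) * mobiusFactor a y := by
      rw [hR, hR', mul_one, mul_one, sub_self, zero_add]; rfl

lemma mobiusFactor_mul (ha : ‖a‖ < 1) (hy : ‖y‖ < 1) :
    mobiusFactor a y * (cfcInvSqrt (1 - star a * a) * (1 + star a * y)) = 1 := by
  have hq := (IsSelfAdjoint.one B).sub (IsSelfAdjoint.star_mul_self a)
  rw [mobiusFactor, mul_assoc, ← mul_assoc (cfcSqrt _),
    cfcSqrt_mul_cfcInvSqrt hq (spectrum_one_sub_star_mul_self_pos ha), one_mul,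
    Ring.inverse_mul_cancel _ (isUnit_one_add_star_mul ha hy)]

lemma mul_mobiusFactor (ha : ‖a‖ < 1) (hy : ‖y‖ < 1) :
    cfcInvSqrt (1 - star a * a) * (1 + star a * y) * mobiusFactor a y = 1 := by
  have hq := (IsSelfAdjoint.one B).sub (IsSelfAdjoint.star_mul_self a)
  rw [mobiusFactor, mul_assoc, ← mul_assoc (1 + _),
    Ring.mul_inverse_cancel _ (isUnit_one_add_star_mul ha hy), one_mul,
    cfcInvSqrt_mul_cfcSqrt hq (spectrum_one_sub_star_mul_self_pos ha)]

end Mobius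

open scoped InnerProductSpace

section DefectIdentity

variable {𝕜 E : Type*} [RCLike 𝕜] [NormedAddCommGroup E] [InnerProductSpace 𝕜 E] [CompleteSpace E]
  {M u v y : E →L[𝕜] E}

lemma norm_sq_sub_norm_sq_apply_eq (hdef : 1 - star M * M = star u * (1 - star y * y) * u)
    (ξ : E) : ‖ξ‖ ^ 2 - ‖M ξ‖ ^ 2 = ‖u ξ‖ ^ 2 - ‖y (u ξ)‖ ^ 2 := by
  have h := congrArg (fun T : E →L[𝕜] E => RCLike.re ⟪T ξ, ξ⟫_𝕜) hdef
  simpa [ContinuousLinearMap.star_eq_adjoint, inner_sub_left,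
    ContinuousLinearMap.adjoint_inner_left, inner_self_eq_norm_sq] using h

lemma norm_lt_one_of_one_sub_star_mul_self_eq
    (hdef : 1 - star M * M = star u * (1 - star y * y) * u) (hvu : v * u = 1)
    (hy : ‖y‖ < 1) : ‖M‖ < 1 := by
  rcases subsingleton_or_nontrivial E with hE | hE
  · simp [Subsingleton.elim M 0]
  have hv : 0 < ‖v‖ := norm_pos_iff.2 (left_ne_zero_of_mul_eq_one hvu)
  have hy2 : 0 < 1 - ‖y‖ ^ 2 := by nlinarith [norm_nonneg y]
  set δ := (1 - ‖y‖ ^ 2) / ‖v‖ ^ 2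
  have hδ : 0 < δ := by positivity
  have hbound : ∀ ξ, ‖M ξ‖ ^ 2 ≤ (1 - δ) * ‖ξ‖ ^ 2 := fun ξ => by
    have h := norm_sq_sub_norm_sq_apply_eq hdef ξ
    have hvuξ : v (u ξ) = ξ := by simpa using DFunLike.congr_fun hvu ξ
    have hξ : ‖ξ‖ ≤ ‖v‖ * ‖u ξ‖ := calc
      ‖ξ‖ = ‖v (u ξ)‖ := by rw [hvuξ]
      _ ≤ ‖v‖ * ‖u ξ‖ := v.le_opNorm _
    have hyu : ‖y (u ξ)‖ ≤ ‖y‖ * ‖u ξ‖ := y.le_opNorm _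
    have hξ2 : ‖ξ‖ ^ 2 ≤ ‖v‖ ^ 2 * ‖u ξ‖ ^ 2 := by
      rw [← mul_pow]; exact pow_le_pow_left₀ (norm_nonneg _) hξ 2
    have hyu2 : ‖y (u ξ)‖ ^ 2 ≤ ‖y‖ ^ 2 * ‖u ξ‖ ^ 2 := by
      rw [← mul_pow]; exact pow_le_pow_left₀ (norm_nonneg _) hyu 2
    have : δ * ‖ξ‖ ^ 2 ≤ ‖ξ‖ ^ 2 - ‖M ξ‖ ^ 2 := by
      rw [h, div_mul_eq_mul_div, div_le_iff₀ (by positivity)]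
      nlinarith [mul_le_mul_of_nonneg_left hξ2 hy2.le,
        mul_le_mul_of_nonneg_left hyu2 (sq_nonneg ‖v‖)]
    linarith
  have hle : ‖M‖ ≤ √(1 - δ) := M.opNorm_le_bound (Real.sqrt_nonneg _) fun ξ => by
    rw [← Real.sqrt_sq (norm_nonneg (M ξ)), ← Real.sqrt_sq (norm_nonneg ξ),
      ← Real.sqrt_mul' _ (sq_nonneg _)]
    exact Real.sqrt_le_sqrt (hbound ξ)
  exact hle.trans_lt ((Real.sqrt_lt' one_pos).2 (by linarith))

lemma one_sub_norm_sq_mul_le_of_one_sub_star_mul_self_eq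
    (hdef : 1 - star M * M = star u * (1 - star y * y) * u) (huv : u * v = 1) (η : E) :
    (1 - ‖M‖ ^ 2) * ‖v η‖ ^ 2 ≤ ‖η‖ ^ 2 - ‖y η‖ ^ 2 := by
  have huvη : u (v η) = η := by simpa using DFunLike.congr_fun huv η
  have h := norm_sq_sub_norm_sq_apply_eq hdef (v η)
  rw [huvη] at h
  have hMv : ‖M (v η)‖ ≤ ‖M‖ * ‖v η‖ := M.le_opNorm _
  nlinarith [norm_nonneg (M (v η))]

end DefectIdentity

section Operator

variable {H : Type*} [NormedAddCommGroup H] [InnerProductSpace ℂ H] [CompleteSpace H]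
  {a y : H →L[ℂ] H}

lemma norm_mobiusMap_lt_one (ha : ‖a‖ < 1) (hy : ‖y‖ < 1) : ‖mobiusMap a y‖ < 1 :=
  norm_lt_one_of_one_sub_star_mul_self_eq (one_sub_star_mobiusMap_mul_self ha hy)
    (mul_mobiusFactor ha hy) hy

lemma one_sub_norm_mobiusMap_sq_mul_le (ha : ‖a‖ < 1) (hy : ‖y‖ < 1) (η : H) :
    (1 - ‖mobiusMap a y‖ ^ 2) * ‖(1 + star a * y) η‖ ^ 2 ≤ ‖η‖ ^ 2 - ‖y η‖ ^ 2 := by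
  have hq := (IsSelfAdjoint.one (H →L[ℂ] H)).sub (IsSelfAdjoint.star_mul_self a)
  set v := cfcInvSqrt (1 - star a * a) * (1 + star a * y)
  have hCv : cfcSqrt (1 - star a * a) * v = 1 + star a * y := by
    rw [← mul_assoc, cfcSqrt_mul_cfcInvSqrt hq (spectrum_one_sub_star_mul_self_pos ha), one_mul]
  have hle : ‖(1 + star a * y) η‖ ≤ ‖v η‖ := calc
    ‖(1 + star a * y) η‖ = ‖cfcSqrt (1 - star a * a) (v η)‖ := by rw [← hCv]; rfl
    _ ≤ ‖cfcSqrt (1 - star a * a)‖ * ‖v η‖ := ContinuousLinearMap.le_opNorm _ _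
    _ ≤ ‖v η‖ := mul_le_of_le_one_left (norm_nonneg _)
      (norm_cfcSqrt_le_one fun t ht => (spectrum_one_sub_star_mul_self_subset_Icc a ht).2)
  have hM := norm_mobiusMap_lt_one ha hy
  calc (1 - ‖mobiusMap a y‖ ^ 2) * ‖(1 + star a * y) η‖ ^ 2
      ≤ (1 - ‖mobiusMap a y‖ ^ 2) * ‖v η‖ ^ 2 := by
        gcongr
        nlinarith [norm_nonneg (mobiusMap a y)]
    _ ≤ ‖η‖ ^ 2 - ‖y η‖ ^ 2 := one_sub_norm_sq_mul_le_of_one_sub_star_mul_self_eq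
        (one_sub_star_mobiusMap_mul_self ha hy) (mobiusFactor_mul ha hy) η

end Operator

lemma hypDist_eq_artanh_norm_mobiusMap {B : Type*} [CStarAlgebra B] (x y : B) :
    hypDist x y = artanh ‖mobiusMap (-x) y‖ := by
  simp only [hypDist, mobiusMap, star_neg, neg_neg, neg_mul, ← sub_eq_add_neg,
    neg_add_eq_sub, ← neg_sub x y, mul_neg, norm_neg]

lemma tendsto_artanh_nhdsLT_one : Tendsto artanh (𝓝[<] 1) atTop := by
  have h1 : Tendsto (fun t : ℝ => 1 - t) (𝓝[<] 1) (𝓝[>] 0) := by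
    refine tendsto_nhdsWithin_of_tendsto_nhds_of_eventually_within _ ?_ ?_
    · have : Tendsto (fun t : ℝ => 1 - t) (𝓝 1) (𝓝 (1 - 1)) := tendsto_const_nhds.sub tendsto_id
      simpa using this.mono_left nhdsWithin_le_nhds
    · filter_upwards [self_mem_nhdsWithin] with t (ht : t < 1) using sub_pos.2 ht
  have h2 : Tendsto (fun t : ℝ => (1 + t) / (1 - t)) (𝓝[<] 1) atTop := by
    simpa [div_eq_mul_inv] using Tendsto.pos_mul_atTop two_pos
      (((continuous_const.add continuous_id).tendsto' (1 : ℝ) 2 (by norm_num)).mono_left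
        nhdsWithin_le_nhds) (tendsto_inv_nhdsGT_zero.comp h1)
  exact (Real.tendsto_log_atTop.comp h2).atTop_div_const two_pos

section UnitVectors

variable {𝕜 E F : Type*} [RCLike 𝕜] [NormedAddCommGroup E] [NormedSpace 𝕜 E]
  [NormedAddCommGroup F] [NormedSpace 𝕜 F]

lemma exists_norm_eq_one_lt_norm_apply [Nontrivial E] (f : E →L[𝕜] F) {r : ℝ} (hr : r < ‖f‖) :
    ∃ η : E, ‖η‖ = 1 ∧ r < ‖f η‖ := by
  let _ := NormedSpace.restrictScalars ℝ 𝕜 E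
  rw [← f.sSup_sphere_eq_norm] at hr
  obtain ⟨_, ⟨η, hη, rfl⟩, hlt⟩ :=
    exists_lt_of_lt_csSup ((NormedSpace.sphere_nonempty.2 zero_le_one).image _) hr
  exact ⟨η, mem_sphere_zero_iff_norm.1 hη, hlt⟩

lemma exists_norm_eq_one_tendsto_norm_apply {f : ℕ → E →L[𝕜] F} {L : ℝ} (hL : 0 < L)
    (hf : Tendsto (fun n => ‖f n‖) atTop (𝓝 L)) :
    ∃ η : ℕ → E, (∀ n, ‖η n‖ = 1) ∧ Tendsto (fun n => ‖f n (η n)‖) atTop (𝓝 L) := by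
  obtain ⟨m, hm⟩ := (hf.eventually (eventually_gt_nhds hL)).exists
  have : Nontrivial E := by
    by_contra hE
    rw [not_nontrivial_iff_subsingleton] at hE
    have : f m = 0 := ContinuousLinearMap.ext fun x => by simp [Subsingleton.elim x 0]
    simp [this] at hm
  choose η hη hlt using fun n : ℕ =>
    exists_norm_eq_one_lt_norm_apply (f n) (sub_lt_self ‖f n‖ (Nat.one_div_pos_of_nat (n := n)))
  refine ⟨η, hη, tendsto_of_tendsto_of_tendsto_of_le_of_le ?_ hf (fun n => (hlt n).le)
    fun n => by simpa [hη n] using (f n).le_opNorm (η n)⟩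
  simpa using hf.sub tendsto_one_div_add_atTop_nhds_zero_nat

end UnitVectors

section Estimates

variable {𝕜 E : Type*} [RCLike 𝕜] [NormedAddCommGroup E] [InnerProductSpace 𝕜 E] [CompleteSpace E]
  {x y : E →L[𝕜] E} {η : E}

lemma sq_norm_sub_apply_le_two_mul_norm_one_sub_star_mul_apply (hx : ‖x‖ ≤ 1) (hy : ‖y‖ ≤ 1)
    (hη : ‖η‖ = 1) : ‖(x - y) η‖ ^ 2 ≤ 2 * ‖(1 - star x * y) η‖ := by
  have hre : RCLike.re ⟪(1 - star x * y) η, η⟫_𝕜 = 1 - RCLike.re ⟪x η, y η⟫_𝕜 := by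
    simp [ContinuousLinearMap.star_eq_adjoint, inner_sub_left,
      ContinuousLinearMap.adjoint_inner_left, hη, inner_re_symm (y η)]
  have hle : RCLike.re ⟪(1 - star x * y) η, η⟫_𝕜 ≤ ‖(1 - star x * y) η‖ := by
    simpa [hη] using re_inner_le_norm ((1 - star x * y) η) η
  have hxη : ‖x η‖ ≤ 1 := (x.unit_le_opNorm η hη.le).trans hx
  have hyη : ‖y η‖ ≤ 1 := (y.unit_le_opNorm η hη.le).trans hy
  rw [sub_apply, norm_sub_sq (𝕜 := 𝕜)]
  nlinarith [norm_nonneg (x η), norm_nonneg (y η)]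

lemma one_sub_mul_le_norm_one_sub_star_mul_apply (hη : ‖η‖ = 1) :
    1 - ‖x‖ * ‖y‖ ≤ ‖(1 - star x * y) η‖ := calc
  1 - ‖x‖ * ‖y‖ ≤ ‖η‖ - ‖(star x * y) η‖ := by
    have : ‖(star x * y) η‖ ≤ ‖x‖ * ‖y‖ := calc
      ‖(star x * y) η‖ ≤ ‖star x * y‖ := (star x * y).unit_le_opNorm η hη.le
      _ ≤ ‖star x‖ * ‖y‖ := norm_mul_le _ _
      _ = ‖x‖ * ‖y‖ := by rw [norm_star x]
    linarith
  _ ≤ ‖(1 - star x * y) η‖ := by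
    simpa using norm_sub_norm_le η ((star x * y) η)

end Estimates

section Sequences

variable {H : Type*} [NormedAddCommGroup H] [InnerProductSpace ℂ H] [CompleteSpace H]
  {S T : ℕ → H →L[ℂ] H}

lemma tendsto_hypDist_atTop_of_unit_vectors (hS : ∀ n, ‖S n‖ < 1) (hT : ∀ n, ‖T n‖ < 1)
    {η : ℕ → H} (hη : ∀ n, ‖η n‖ = 1) {κ : ℝ} (hκ : 0 < κ)
    (hκη : ∀ᶠ n in atTop, κ ≤ ‖(1 - star (S n) * T n) (η n)‖)
    (hTη : Tendsto (fun n => ‖T n (η n)‖) atTop (𝓝 1)) :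
    Tendsto (fun n => hypDist (S n) (T n)) atTop atTop := by
  have hS' : ∀ n, ‖-S n‖ < 1 := by simpa using hS
  set t := fun n => ‖mobiusMap (-S n) (T n)‖
  have ht1 : ∀ n, t n < 1 := fun n => norm_mobiusMap_lt_one (hS' n) (hT n)
  have hbound : ∀ᶠ n in atTop, 1 - t n ≤ (1 - ‖T n (η n)‖ ^ 2) / κ ^ 2 := by
    filter_upwards [hκη] with n hn
    have h := one_sub_norm_mobiusMap_sq_mul_le (hS' n) (hT n) (η n)
    rw [star_neg, neg_mul, ← sub_eq_add_neg, hη n, one_pow] at h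
    have ht : 1 - t n ≤ 1 - t n ^ 2 := by nlinarith [norm_nonneg (mobiusMap (-S n) (T n)), ht1 n]
    have hκ2 : κ ^ 2 ≤ ‖(1 - star (S n) * T n) (η n)‖ ^ 2 := pow_le_pow_left₀ hκ.le hn 2
    rw [le_div_iff₀ (by positivity)]
    nlinarith [mul_le_mul_of_nonneg_left hκ2 (sub_nonneg.2 (ht1 n).le),
      mul_le_mul_of_nonneg_right ht (sq_nonneg ‖(1 - star (S n) * T n) (η n)‖)]
  have hlim : Tendsto (fun n => (1 - ‖T n (η n)‖ ^ 2) / κ ^ 2) atTop (𝓝 0) := by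
    simpa using ((tendsto_const_nhds (x := (1 : ℝ))).sub (hTη.pow 2)).div_const (κ ^ 2)
  have ht : Tendsto t atTop (𝓝[<] 1) := by
    refine tendsto_nhdsWithin_iff.2 ⟨?_, Eventually.of_forall ht1⟩
    have := squeeze_zero' (Eventually.of_forall fun n => sub_nonneg.2 (ht1 n).le) hbound hlim
    simpa using (tendsto_const_nhds (x := (1 : ℝ))).sub this
  simp only [hypDist_eq_artanh_norm_mobiusMap]
  exact tendsto_artanh_nhdsLT_one.comp ht

lemma tendsto_hypDist_atTop_of_tendsto_norm_sub (hS : ∀ n, ‖S n‖ < 1) (hT : ∀ n, ‖T n‖ < 1)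
    (h : Tendsto (fun n => ‖S n - T n‖) atTop (𝓝 2)) :
    Tendsto (fun n => hypDist (S n) (T n)) atTop atTop := by
  obtain ⟨η, hη, hd⟩ := exists_norm_eq_one_tendsto_norm_apply two_pos h
  refine tendsto_hypDist_atTop_of_unit_vectors hS hT hη one_pos ?_ ?_
  · filter_upwards [(hd.pow 2).eventually (eventually_gt_nhds (by norm_num : (2 : ℝ) < 2 ^ 2))]
      with n hn
    have := sq_norm_sub_apply_le_two_mul_norm_one_sub_star_mul_apply (hS n).le (hT n).le (hη n)
    linarith
  · have hle : ∀ n, ‖T n (η n)‖ ≤ 1 := fun n =>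
      ((T n).unit_le_opNorm _ (hη n).le).trans (hT n).le
    have hge : ∀ n, ‖(S n - T n) (η n)‖ - 1 ≤ ‖T n (η n)‖ := fun n => by
      have := ((S n).unit_le_opNorm _ (hη n).le).trans (hS n).le
      have := norm_sub_le (S n (η n)) (T n (η n))
      rw [sub_apply]
      linarith
    refine tendsto_of_tendsto_of_tendsto_of_le_of_le ?_ tendsto_const_nhds hge hle
    convert hd.sub_const 1
    norm_num

lemma tendsto_hypDist_atTop_of_norm_le_of_tendsto_norm (hS : ∀ n, ‖S n‖ < 1)
    (hT : ∀ n, ‖T n‖ < 1) {c : ℝ} (hc : c < 1) (hSc : ∀ n, ‖S n‖ ≤ c)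
    (hT1 : Tendsto (fun n => ‖T n‖) atTop (𝓝 1)) :
    Tendsto (fun n => hypDist (S n) (T n)) atTop atTop := by
  obtain ⟨η, hη, hTη⟩ := exists_norm_eq_one_tendsto_norm_apply one_pos hT1
  refine tendsto_hypDist_atTop_of_unit_vectors hS hT hη (sub_pos.2 hc)
    (Eventually.of_forall fun n => ?_) hTη
  have := one_sub_mul_le_norm_one_sub_star_mul_apply (x := S n) (y := T n) (hη n)
  have : ‖S n‖ * ‖T n‖ ≤ c := (mul_le_of_le_one_right (norm_nonneg _) (hT n).le).trans (hSc n)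
  linarith

end Sequences

/-- Let `(Sₙ)`, `(Tₙ)` be sequences of strict contractions on a complex Hilbert
space `H`. If either `‖Sₙ − Tₙ‖ → 2`, or there is `c < 1` with `‖Sₙ‖ ≤ c` for all `n` and
`‖Tₙ‖ → 1`, then `ρ(Sₙ, Tₙ) → ∞` for the hyperbolic distance `ρ` on the open unit ball of
`B(H)`. -/
theorem hypDist_tendsto_atTop
    {H : Type*} [NormedAddCommGroup H] [InnerProductSpace ℂ H] [CompleteSpace H]
    (S T : ℕ → H →L[ℂ] H)
    (hS : ∀ n, ‖S n‖ < 1) (hT : ∀ n, ‖T n‖ < 1)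
    (h : Tendsto (fun n => ‖S n - T n‖) atTop (nhds 2) ∨
      ∃ c : ℝ, c < 1 ∧ (∀ n, ‖S n‖ ≤ c) ∧ Tendsto (fun n => ‖T n‖) atTop (nhds 1)) :
    Tendsto (fun n => hypDist (S n) (T n)) atTop atTop := by
  rcases h with h | ⟨c, hc, hSc, hT1⟩
  · exact tendsto_hypDist_atTop_of_tendsto_norm_sub hS hT h
  · exact tendsto_hypDist_atTop_of_norm_le_of_tendsto_norm hS hT hc hSc hT1
end
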